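/- A left head variable free ATRS R is terminating if and only if the TRS U↓(R) = R_η↓ ∪ U(R) is terminating. -/

import Mathlib

/-- First-order terms over a signature `F` with arity function `ar` and variables `V`. -/
inductive Term (F : Type) (ar : F → ℕ) (V : Type) : Type where
  | var : V → Term F ar V
  | app : (f : F) → (Fin (ar f) → Term F ar V) → Term F ar V

namespace Term

variable {F V : Type} {ar : F → ℕ}

/-- Application of a substitution. -/
def subst (σ : V → Term F ar V) : Term F ar V → Term F ar V
  | .var x => σ x
  | .app f ts => .app f (fun i => (ts i).subst σ)

/-- Size of a term. -/
def size : Term F ar V → ℕ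
  | .var _ => 1
  | .app _ ts => 1 + ∑ i, (ts i).size

end Term

section Rewriting

variable {F V : Type} {ar : F → ℕ}

/-- The (reflexive) subterm relation: `Subterm u t` means `u` occurs in `t`. -/
inductive Subterm : Term F ar V → Term F ar V → Prop where
  | refl (t) : Subterm t t
  | app (f) (ts : Fin (ar f) → Term F ar V) (i) (u) :
      Subterm u (ts i) → Subterm u (.app f ts)

/-- Proper subterm: `PSub u t` means `u` is a proper subterm of `t`. -/
def PSub (u t : Term F ar V) : Prop :=
  ∃ (f : F) (ts : Fin (ar f) → Term F ar V) (i : Fin (ar f)),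
    t = Term.app f ts ∧ Subterm u (ts i)

/-- One-step rewrite relation of a TRS `R`: closure of the rules under
contexts and substitutions. -/
inductive Rew (R : Set (Term F ar V × Term F ar V)) : Term F ar V → Term F ar V → Prop where
  | rule (l r : Term F ar V) (σ : V → Term F ar V) :
      (l, r) ∈ R → Rew R (l.subst σ) (r.subst σ)
  | congr (f : F) (ts : Fin (ar f) → Term F ar V) (i : Fin (ar f)) (u : Term F ar V) :
      Rew R (ts i) u → Rew R (.app f ts) (.app f (Function.update ts i u))

/-- Many-step rewriting. -/
def RStar (R : Set (Term F ar V × Term F ar V)) : Term F ar V → Term F ar V → Prop :=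
  Relation.ReflTransGen (Rew R)

/-- Normal forms. -/
def NF (R : Set (Term F ar V × Term F ar V)) (t : Term F ar V) : Prop := ∀ u, ¬ Rew R t u

/-- `t` rewrites to the normal form `u` (w.r.t. `R`). -/
def NormTo (R : Set (Term F ar V × Term F ar V)) (t u : Term F ar V) : Prop :=
  RStar R t u ∧ NF R u

/-- Termination: the rewrite relation is well-founded. -/
def Terminating (R : Set (Term F ar V × Term F ar V)) : Prop :=
  WellFounded (fun t s => Rew R s t)

/-- Confluence. -/
def Confluent (R : Set (Term F ar V × Term F ar V)) : Prop :=
  ∀ s t u, RStar R s t → RStar R s u → ∃ v, RStar R t v ∧ RStar R u v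

/-- Innermost one-step rewriting: the contracted redex has only normal
proper subterms. -/
inductive IRew (R : Set (Term F ar V × Term F ar V)) : Term F ar V → Term F ar V → Prop where
  | rule (l r : Term F ar V) (σ : V → Term F ar V) :
      (l, r) ∈ R → (∀ u, PSub u (l.subst σ) → NF R u) →
      IRew R (l.subst σ) (r.subst σ)
  | congr (f : F) (ts : Fin (ar f) → Term F ar V) (i : Fin (ar f)) (u : Term F ar V) :
      IRew R (ts i) u → IRew R (.app f ts) (.app f (Function.update ts i u))

/-- Innermost termination. -/
def ITerminating (R : Set (Term F ar V × Term F ar V)) : Prop :=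
  WellFounded (fun t s => IRew R s t)

/-- `m`-fold composition of a relation. -/
def RelPow (r : α → α → Prop) : ℕ → α → α → Prop
  | 0 => Eq
  | n + 1 => fun a c => ∃ b, r a b ∧ RelPow r n b c

/-- Derivation height of `t` w.r.t. a relation. -/
noncomputable def dh (r : α → α → Prop) (t : α) : ℕ :=
  sSup { m | ∃ u, RelPow r m t u }

/-- Derivational complexity w.r.t. a relation, restricted to starting terms
satisfying `P`. -/
noncomputable def dcOn {F V : Type} {ar : F → ℕ}
    (r : Term F ar V → Term F ar V → Prop) (P : Term F ar V → Prop) (n : ℕ) : ℕ :=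
  sSup { m | ∃ t, P t ∧ t.size ≤ n ∧ m = dh r t }

/-- `f ∈ O(g)`. -/
def BigO (f g : ℕ → ℕ) : Prop := ∃ M N : ℕ, ∀ n, f n ≤ M * g n + N

end Rewriting
section ATRS

/-- Signature for (un)curried applicative systems: `none` is the binary
application symbol `∘`, and `some (c, i)` is the symbol `c_i` of arity `i`
(with `c_0 = c` an applicative constant). -/
abbrev USig (C : Type) := Option (C × ℕ)

/-- Arity function for `USig`. -/
def uar {C : Type} : USig C → ℕ
  | none => 2
  | some (_, i) => i

/-- Terms over the signature `USig C` (variables are natural numbers). -/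
abbrev ATerm (C : Type) := Term (USig C) uar ℕ

variable {C : Type}

/-- Binary application `s ∘ t`. -/
def appT (s t : ATerm C) : ATerm C :=
  .app none (fun i => if i.1 = 0 then s else t)

/-- The applicative constant `c` (i.e. `c_0`). -/
def constT (c : C) : ATerm C :=
  .app (some (c, 0)) (fun i => (Nat.not_lt_zero _ i.isLt).elim)

/-- Symbols of a purely applicative term: only `∘` and constants `c_0`. -/
def ApplicativeSym : USig C → Prop
  | none => True
  | some (_, i) => i = 0

/-- A term over the applicative signature (constants plus `∘`). -/
def ApplicativeT (t : ATerm C) : Prop :=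
  ∀ (u : ATerm C) (f : USig C) (ts : Fin (uar f) → ATerm C),
    Subterm u t → u = Term.app f ts → ApplicativeSym f

/-- `headCount t = some (c, n)` iff `t = c ∘ t₁ ∘ ⋯ ∘ tₙ` for some terms `tᵢ`. -/
def headCount : ATerm C → Option (C × ℕ)
  | .var _ => none
  | .app none ts => (headCount (ts ⟨0, by simp [uar]⟩)).map (fun p => (p.1, p.2 + 1))
  | .app (some (_, _ + 1)) _ => none
  | .app (some (c, 0)) _ => some (c, 0)

/-- The spine `c ∘ t₁ ∘ ⋯ ∘ tₙ` occurs as a subterm of a left- or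
right-hand side of `R`. -/
def SpineIn (R : Set (ATerm C × ATerm C)) (c : C) (n : ℕ) : Prop :=
  ∃ p ∈ R, ∃ t : ATerm C, (Subterm t p.1 ∨ Subterm t p.2) ∧ headCount t = some (c, n)

/-- `aa` is the applicative-arity function of `R`: `aa c` is the maximal `n`
such that `c ∘ t₁ ∘ ⋯ ∘ tₙ` occurs in a rule of `R` (and `0` if `c` does not
occur applied). -/
def AASpec (R : Set (ATerm C × ATerm C)) (aa : C → ℕ) : Prop :=
  ∀ c : C, (∀ n, SpineIn R c n → n ≤ aa c) ∧ (aa c = 0 ∨ SpineIn R c (aa c))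

/-- A term is head variable free if no subterm is of the form `x ∘ v` with
`x` a variable. -/
def HeadVarFree (t : ATerm C) : Prop :=
  ∀ u : ATerm C, Subterm u t → ∀ (x : ℕ) (v : ATerm C), u ≠ appT (.var x) v

/-- Basic well-formedness of an applicative TRS: left-hand sides are not
variables, right-hand side variables occur on the left, and both sides are
applicative terms. -/
def IsATRS (R : Set (ATerm C × ATerm C)) : Prop :=
  ∀ p ∈ R, (∀ x : ℕ, p.1 ≠ Term.var x) ∧
    (∀ x : ℕ, Subterm (.var x) p.2 → Subterm (.var x) p.1) ∧
    ApplicativeT p.1 ∧ ApplicativeT p.2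

/-- `R` is left head variable free. -/
def LHVF (R : Set (ATerm C × ATerm C)) : Prop := ∀ p ∈ R, HeadVarFree p.1

/-- The variables `x_0, …, x_{i-1}`. -/
def uvars (i : ℕ) : Fin i → ATerm C := fun j => .var j.1

/-- The term `f_i(x_0,…,x_{i-1})`. -/
def fiT (c : C) (i : ℕ) : ATerm C := .app (some (c, i)) (fun j => .var j.1)

/-- The uncurrying system `U`, with rules
`c_i(x_1,…,x_i) ∘ y → c_{i+1}(x_1,…,x_i,y)` for all `0 ≤ i < aa c`. -/
def USys (aa : C → ℕ) : Set (ATerm C × ATerm C) :=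
  { p | ∃ (c : C) (i : ℕ), i < aa c ∧
      p = (appT (fiT c i) (.var i), fiT c (i + 1)) }

/-- The currying system `C(F)` (for a signature with arities `arF`), with
rules `f_{i+1}(x_1,…,x_i,y) → f_i(x_1,…,x_i) ∘ y` for all `0 ≤ i < arF f`
(where `f_{arF f}` plays the role of `f`). -/
def CurrySys {F : Type} (arF : F → ℕ) : Set (ATerm F × ATerm F) :=
  { p | ∃ (f : F) (i : ℕ), i < arF f ∧
      p = (fiT f (i + 1), appT (fiT f i) (.var i)) }

/-- The η-saturation `R_η` of `R` (w.r.t. applicative arities `aa`). -/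
inductive Eta (aa : C → ℕ) (R : Set (ATerm C × ATerm C)) : ATerm C × ATerm C → Prop where
  | base (p) : p ∈ R → Eta aa R p
  | eta (l r : ATerm C) (c : C) (n x : ℕ) :
      Eta aa R (l, r) → headCount l = some (c, n) → n < aa c →
      ¬ Subterm (.var x) l → ¬ Subterm (.var x) r →
      Eta aa R (appT l (.var x), appT r (.var x))

/-- The uncurried system `R_η↓`: the rules of `R_η` with both sides in
`U`-normal form. -/
def EtaDown (aa : C → ℕ) (R : Set (ATerm C × ATerm C)) : Set (ATerm C × ATerm C) :=
  { p | ∃ l r : ATerm C, Eta aa R (l, r) ∧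
      NormTo (USys aa) l p.1 ∧ NormTo (USys aa) r p.2 }

/-- The transformed system `U↓(R) = R_η↓ ∪ U(R)`. -/
def UD (aa : C → ℕ) (R : Set (ATerm C × ATerm C)) : Set (ATerm C × ATerm C) :=
  EtaDown aa R ∪ USys aa

/-- Symbols of the signature of `U↓(R)`: `∘` and `c_i` with `i ≤ aa c`. -/
def GoodSym (aa : C → ℕ) : USig C → Prop
  | none => True
  | some (c, i) => i ≤ aa c

/-- A term over the signature of `U↓(R)`. -/
def GoodTerm (aa : C → ℕ) (t : ATerm C) : Prop :=
  ∀ (u : ATerm C) (f : USig C) (ts : Fin (uar f) → ATerm C),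
    Subterm u t → u = Term.app f ts → GoodSym aa f

/-- `C'`: curry a term over the signature of `U↓(R)` and identify all
symbols `c_i` originating from the same constant `c`. -/
def curryId : ATerm C → ATerm C
  | .var x => .var x
  | .app none ts => appT (curryId (ts ⟨0, by simp [uar]⟩)) (curryId (ts ⟨1, by simp [uar]⟩))
  | .app (some (c, i)) ts =>
      (List.ofFn (fun j : Fin (uar (some (c, i))) => curryId (ts j))).foldl appT (constT c)

end ATRS

/-!
(⇒) `curryId` maps every `R_η↓`-step to an `R`-step and every `U`-step to an equality, so
`t ↦ (curryId t, t)` embeds `U↓(R)` into the lexicographic product of `R` with the terminating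
system `U` (whose steps decrease the size).

(⇐) The `U`-normal form `t↓_U` maps every `R`-step to a nonempty `U↓(R)`-derivation. A rule
applied at the head of a spine `c ∘ t₁ ∘ ⋯ ∘ tₙ` is simulated by its η-expansions as long as `c`
can absorb further arguments, and then by the normalized rule itself; left head variable freeness
makes `↓_U` commute with the substitutions involved.
-/

open Relation Function

namespace Term

variable {F V : Type} {ar : F → ℕ}

theorem subst_subst (t : Term F ar V) (σ τ : V → Term F ar V) :
    (t.subst σ).subst τ = t.subst fun x => (σ x).subst τ := by
  induction t with
  | var x => rfl
  | app f ts ih => simp only [subst, ih]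

theorem subst_var (t : Term F ar V) : t.subst .var = t := by
  induction t with
  | var x => rfl
  | app f ts ih => simp only [subst, ih]

theorem subst_congr {t : Term F ar V} {σ τ : V → Term F ar V}
    (h : ∀ x, Subterm (.var x) t → σ x = τ x) : t.subst σ = t.subst τ := by
  induction t with
  | var x => exact h x (.refl _)
  | app f ts ih =>
    simp only [subst]
    congr 1
    funext i
    exact ih i fun x hx => h x (.app f ts i _ hx)

theorem finite_vars (t : Term F ar V) : {x | Subterm (.var x) t}.Finite := by
  induction t with
  | var y =>
    refine (Set.finite_singleton y).subset fun x hx => ?_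
    cases hx
    rfl
  | app f ts ih =>
    refine (Set.finite_iUnion ih).subset fun x hx => ?_
    cases hx with
    | app _ _ i _ hx => exact Set.mem_iUnion.2 ⟨i, hx⟩

def root : Term F ar V → Option F
  | .var _ => none
  | .app f _ => some f

theorem root_subst {t : Term F ar V} {f : F} (h : t.root = some f) (σ : V → Term F ar V) :
    (t.subst σ).root = some f := by
  cases t with
  | var x => cases h
  | app g ts => exact h

theorem size_app_update_lt {f : F} {ts : Fin (ar f) → Term F ar V} {i : Fin (ar f)}
    {u : Term F ar V} (h : u.size < (ts i).size) :
    (app f (update ts i u)).size < (app f ts).size := by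
  have hrest : ∑ j ∈ Finset.univ.erase i, (update ts i u j).size
      = ∑ j ∈ Finset.univ.erase i, (ts j).size :=
    Finset.sum_congr rfl fun j hj => by rw [update_of_ne (Finset.ne_of_mem_erase hj)]
  simp only [size, ← Finset.add_sum_erase _ _ (Finset.mem_univ i), update_self, hrest]
  omega

end Term

section Rewriting

variable {F V : Type} {ar : F → ℕ} {R S : Set (Term F ar V × Term F ar V)}

theorem Rew.mono (hRS : R ⊆ S) {s t : Term F ar V} (h : Rew R s t) : Rew S s t := by
  induction h with
  | rule l r σ hm => exact .rule l r σ (hRS hm)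
  | congr f ts i u _ ih => exact .congr f ts i u ih

theorem Rew.of_mem {l r : Term F ar V} (h : (l, r) ∈ R) : Rew R l r := by
  simpa only [Term.subst_var] using Rew.rule l r .var h

theorem Rew.subst {s t : Term F ar V} (h : Rew R s t) (σ : V → Term F ar V) :
    Rew R (s.subst σ) (t.subst σ) := by
  induction h with
  | rule l r τ hm => simpa only [Term.subst_subst] using Rew.rule l r _ hm
  | congr f ts i u _ ih =>
    have hupd : (fun j => (update ts i u j).subst σ)
        = update (fun j => (ts j).subst σ) i (u.subst σ) :=
      funext fun j => by rcases eq_or_ne j i with rfl | hj <;> simp [*]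
    simpa only [Term.subst, hupd] using Rew.congr f (fun j => (ts j).subst σ) i _ ih

theorem Rew.size_lt_of_forall {s t : Term F ar V}
    (hR : ∀ l r σ, (l, r) ∈ R → (r.subst σ).size < (l.subst σ).size) (h : Rew R s t) :
    t.size < s.size := by
  induction h with
  | rule l r σ hm => exact hR l r σ hm
  | congr f ts i u _ ih => exact Term.size_app_update_lt ih

theorem RStar.mono (hRS : R ⊆ S) {s t : Term F ar V} (h : RStar R s t) : RStar S s t :=
  h.lift id fun _ _ => Rew.mono hRS

theorem RStar.subst {s t : Term F ar V} (h : RStar R s t) (σ : V → Term F ar V) :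
    RStar R (s.subst σ) (t.subst σ) :=
  h.lift _ fun _ _ hab => hab.subst σ

theorem transGen_rew_app_update {f : F} {ts : Fin (ar f) → Term F ar V} {i : Fin (ar f)}
    {b : Term F ar V} (h : TransGen (Rew R) (ts i) b) :
    TransGen (Rew R) (.app f ts) (.app f (update ts i b)) := by
  have := h.lift (fun x => Term.app f (update ts i x)) fun x y hxy => by
    simpa using Rew.congr f (update ts i x) i y (by simpa using hxy)
  rwa [onFun, update_eq_self] at this

theorem RStar.app_update {f : F} {ts : Fin (ar f) → Term F ar V} {i : Fin (ar f)}
    {b : Term F ar V} (h : RStar R (ts i) b) :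
    RStar R (.app f ts) (.app f (update ts i b)) := by
  rcases reflTransGen_iff_eq_or_transGen.mp h with rfl | h
  · rw [update_eq_self]
    exact .refl
  · exact (transGen_rew_app_update h).to_reflTransGen

theorem RStar.app {f : F} {ts us : Fin (ar f) → Term F ar V} (h : ∀ i, RStar R (ts i) (us i)) :
    RStar R (.app f ts) (.app f us) := by
  classical
  suffices ∀ s : Finset (Fin (ar f)), RStar R (.app f ts) (.app f (s.piecewise us ts)) by
    simpa using this .univ
  intro s
  induction s using Finset.induction_on with
  | empty => simpa using .refl
  | insert i s hi ih =>
    rw [Finset.piecewise_insert]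
    refine ih.trans (RStar.app_update ?_)
    simpa [Finset.piecewise_eq_of_notMem _ _ _ hi] using h i

theorem RStar.subst_of_forall (t : Term F ar V) {σ τ : V → Term F ar V}
    (h : ∀ x, RStar R (σ x) (τ x)) : RStar R (t.subst σ) (t.subst τ) := by
  induction t with
  | var x => exact h x
  | app f ts ih => exact RStar.app ih

end Rewriting

theorem List.ofFn_update {α : Type*} {n : ℕ} (f : Fin n → α) (i : Fin n) (b : α) :
    List.ofFn (update f i b) = (List.ofFn f).set i b := by
  refine List.ext_getElem (by simp) fun k hk _ => ?_
  simp only [List.getElem_ofFn, List.getElem_set]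
  split_ifs with hik
  · subst hik
    simp
  · exact update_of_ne (fun h => hik (congrArg Fin.val h).symm) _ _

theorem wellFounded_of_lex_map {α β : Type*} {r : α → α → Prop} {rβ : β → β → Prop}
    {q : α → α → Prop} (φ : α → β) (hβ : WellFounded rβ) (hq : WellFounded q)
    (h : ∀ a b, r a b → rβ (φ a) (φ b) ∨ φ a = φ b ∧ q a b) : WellFounded r := by
  refine Subrelation.wf (fun {a b} hab => ?_) (InvImage.wf (fun a => (φ a, a)) (hβ.prod_lex hq))
  rcases h a b hab with hlt | ⟨heq, hq⟩
  · exact Prod.Lex.left _ _ hlt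
  · change Prod.Lex _ _ (φ a, a) (φ b, b)
    rw [heq]
    exact Prod.Lex.right _ hq

section ATerm

variable {C : Type}

@[simp] theorem root_appT (a b : ATerm C) : (appT a b).root = some none := rfl

theorem app_none_eq_appT (ts : Fin (uar (none : USig C)) → ATerm C) :
    Term.app none ts = appT (ts ⟨0, by simp [uar]⟩) (ts ⟨1, by simp [uar]⟩) := by
  unfold appT
  congr 1
  funext ⟨j, hj⟩
  match j, hj with
  | 0, _ => rfl
  | 1, _ => rfl

theorem appT_injective {a b a' b' : ATerm C} (h : appT a b = appT a' b') : a = a' ∧ b = b' := by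
  have hargs := eq_of_heq (Term.app.inj h).2
  exact ⟨by simpa using congrFun hargs ⟨0, by simp [uar]⟩,
    by simpa using congrFun hargs ⟨1, by simp [uar]⟩⟩

@[simp] theorem appT_subst (a b : ATerm C) (σ : ℕ → ATerm C) :
    (appT a b).subst σ = appT (a.subst σ) (b.subst σ) := by
  simp only [appT, Term.subst, apply_ite]

@[elab_as_elim]
theorem ATerm.induction {motive : ATerm C → Prop} (var : ∀ x, motive (.var x))
    (app : ∀ a b, motive a → motive b → motive (appT a b))
    (sym : ∀ p ts, (∀ i, motive (ts i)) → motive (.app (some p) ts)) (t : ATerm C) :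
    motive t := by
  induction t with
  | var x => exact var x
  | app f ts ih =>
    match f with
    | none => rw [app_none_eq_appT]; exact app _ _ (ih _) (ih _)
    | some p => exact sym p ts ih

theorem subterm_appT_iff {u a b : ATerm C} :
    Subterm u (appT a b) ↔ u = appT a b ∨ Subterm u a ∨ Subterm u b := by
  constructor
  · rintro (_ | ⟨_, _, ⟨j, hj⟩, _, h⟩)
    · exact .inl rfl
    · match j, hj with
      | 0, _ => exact .inr (.inl h)
      | 1, _ => exact .inr (.inr h)
  · rintro (rfl | h | h)
    · exact .refl _
    · exact .app none _ ⟨0, by simp [uar]⟩ _ h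
    · exact .app none _ ⟨1, by simp [uar]⟩ _ h

theorem app_none_update_zero (a b u : ATerm C) :
    Term.app none (update (fun i : Fin (uar (none : USig C)) => if i.1 = 0 then a else b)
      ⟨0, by simp [uar]⟩ u) = appT u b := by
  rw [app_none_eq_appT]
  simp [update, Fin.ext_iff]

theorem app_none_update_one (a b u : ATerm C) :
    Term.app none (update (fun i : Fin (uar (none : USig C)) => if i.1 = 0 then a else b)
      ⟨1, by simp [uar]⟩ u) = appT a u := by
  rw [app_none_eq_appT]
  simp [update, Fin.ext_iff]

theorem Rew.appT_left {S : Set (ATerm C × ATerm C)} {a a' : ATerm C} (b : ATerm C)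
    (h : Rew S a a') : Rew S (appT a b) (appT a' b) := by
  have := Rew.congr none (fun i => if i.1 = 0 then a else b) ⟨0, by simp [uar]⟩ a' h
  rwa [app_none_update_zero] at this

theorem Rew.appT_right {S : Set (ATerm C × ATerm C)} (a : ATerm C) {b b' : ATerm C}
    (h : Rew S b b') : Rew S (appT a b) (appT a b') := by
  have := Rew.congr none (fun i => if i.1 = 0 then a else b) ⟨1, by simp [uar]⟩ b' h
  rwa [app_none_update_one] at this

@[elab_as_elim]
theorem Rew.induction_on_appT {S : Set (ATerm C × ATerm C)} {motive : ATerm C → ATerm C → Prop}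
    {s t : ATerm C} (h : Rew S s t)
    (rule : ∀ l r σ, (l, r) ∈ S → motive (l.subst σ) (r.subst σ))
    (left : ∀ a a' b, Rew S a a' → motive a a' → motive (appT a b) (appT a' b))
    (right : ∀ a b b', Rew S b b' → motive b b' → motive (appT a b) (appT a b'))
    (sym : ∀ p ts i u, Rew S (ts i) u → motive (ts i) u →
      motive (.app (some p) ts) (.app (some p) (update ts i u))) : motive s t := by
  induction h with
  | rule l r σ hm => exact rule l r σ hm
  | congr f ts i u h ih =>
    match f, i with
    | some p, i => exact sym p ts i u h ih
    | none, ⟨0, _⟩ =>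
      rw [app_none_eq_appT, app_none_eq_appT]
      simpa [update, Fin.ext_iff] using left _ _ _ h ih
    | none, ⟨1, _⟩ =>
      rw [app_none_eq_appT, app_none_eq_appT]
      simpa [update, Fin.ext_iff] using right _ _ _ h ih

theorem RStar.appT {S : Set (ATerm C × ATerm C)} {a a' b b' : ATerm C}
    (ha : RStar S a a') (hb : RStar S b b') : RStar S (appT a b) (appT a' b') :=
  RStar.app fun i => by by_cases hi : i.1 = 0 <;> simpa [hi]

end ATerm

section Applicative

variable {C : Type}

theorem forall_subterm_appT {P : ATerm C → Prop} {a b : ATerm C} :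
    (∀ u, Subterm u (appT a b) → P u) ↔
      P (appT a b) ∧ (∀ u, Subterm u a → P u) ∧ ∀ u, Subterm u b → P u := by
  simp only [subterm_appT_iff]
  exact ⟨fun h => ⟨h _ (.inl rfl), fun u hu => h u (.inr (.inl hu)),
    fun u hu => h u (.inr (.inr hu))⟩,
    fun ⟨h, ha, hb⟩ u hu => hu.elim (· ▸ h) (·.elim (ha u) (hb u))⟩

theorem applicativeT_var (x : ℕ) : ApplicativeT (.var x : ATerm C) := by
  rintro u f ts ⟨⟩ ⟨⟩

theorem applicativeT_appT {a b : ATerm C} :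
    ApplicativeT (appT a b) ↔ ApplicativeT a ∧ ApplicativeT b := by
  have key := forall_subterm_appT (a := a) (b := b)
    (P := fun u => ∀ f ts, u = Term.app f ts → ApplicativeSym f)
  have hroot : ∀ (f : USig C) ts, appT a b = Term.app f ts → ApplicativeSym f := by
    rintro f ts ⟨⟩
    trivial
  have hdef : ∀ t : ATerm C, ApplicativeT t ↔
      ∀ u, Subterm u t → ∀ f ts, u = Term.app f ts → ApplicativeSym f :=
    fun t => ⟨fun h u hu f ts he => h u f ts hu he, fun h u f ts hu he => h u hu f ts he⟩
  rw [hdef, hdef, hdef, key, and_iff_right hroot]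

theorem ApplicativeT.arity_eq_zero {c : C} {i : ℕ} {ts : Fin (uar (some (c, i))) → ATerm C}
    (h : ApplicativeT (.app (some (c, i)) ts)) : i = 0 :=
  h _ _ ts (.refl _) rfl

theorem headVarFree_var (x : ℕ) : HeadVarFree (.var x : ATerm C) := by
  rintro u ⟨⟩ y v ⟨⟩

theorem headVarFree_appT {a b : ATerm C} :
    HeadVarFree (appT a b) ↔ (∀ y, a ≠ .var y) ∧ HeadVarFree a ∧ HeadVarFree b := by
  have key := forall_subterm_appT (a := a) (b := b)
    (P := fun u => ∀ (x : ℕ) (v : ATerm C), u ≠ appT (.var x) v)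
  have hroot : (∀ (x : ℕ) (v : ATerm C), appT a b ≠ appT (.var x) v) ↔ ∀ y, a ≠ .var y :=
    ⟨fun h y hy => h y b (by rw [hy]), fun h x v he => h x (appT_injective he).1⟩
  simp only [HeadVarFree]
  rw [key, hroot]

theorem HeadVarFree.arg {p : C × ℕ} {ts : Fin (uar (some p)) → ATerm C}
    (h : HeadVarFree (.app (some p) ts)) (i : Fin (uar (some p))) : HeadVarFree (ts i) :=
  fun u hu => h u (.app _ ts i u hu)

end Applicative

section Uncurrying

variable {C : Type} {aa : C → ℕ}

theorem mem_USys {l r : ATerm C} :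
    (l, r) ∈ USys aa ↔ ∃ c i, i < aa c ∧ l = appT (fiT c i) (.var i) ∧ r = fiT c (i + 1) := by
  simp [USys]

theorem fiT_subst (c : C) (i : ℕ) (σ : ℕ → ATerm C) :
    (fiT c i).subst σ = .app (some (c, i)) fun j => σ j := rfl

theorem size_appT (a b : ATerm C) : (appT a b).size = 1 + a.size + b.size := by
  change 1 + ∑ i : Fin 2, (if (i : ℕ) = 0 then a else b).size = _
  simp [Fin.sum_univ_two, add_assoc]

theorem size_fiT_subst (c : C) (i : ℕ) (σ : ℕ → ATerm C) :
    ((fiT c i).subst σ).size = 1 + ∑ j : Fin i, (σ j).size := rfl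

theorem size_lt_of_mem_USys {l r : ATerm C} (h : (l, r) ∈ USys aa) (σ : ℕ → ATerm C) :
    (r.subst σ).size < (l.subst σ).size := by
  obtain ⟨c, i, -, rfl, rfl⟩ := mem_USys.1 h
  rw [appT_subst, size_appT, size_fiT_subst, size_fiT_subst, Fin.sum_univ_castSucc]
  simp only [Fin.val_castSucc, Fin.val_last]
  change _ < _ + (σ i).size
  omega

theorem size_lt_of_rew_USys {s t : ATerm C} (h : Rew (USys aa) s t) : t.size < s.size :=
  Rew.size_lt_of_forall (fun _ _ σ h => size_lt_of_mem_USys h σ) h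

theorem terminating_USys (aa : C → ℕ) : Terminating (USys aa) :=
  Subrelation.wf size_lt_of_rew_USys (measure Term.size).wf

/-- `Fin.snoc`, typed to fit the arities `uar (some (c, i))`. -/
def appendArg {c : C} {i : ℕ} (us : Fin (uar (some (c, i))) → ATerm C) (w : ATerm C) :
    Fin (uar (some (c, i + 1))) → ATerm C :=
  fun j => if h : j.1 < i then us ⟨j.1, h⟩ else w

/-- `uncurryApp aa x w` is the `U`-normal form of `x ∘ w` when `x` and `w` are `U`-normal. -/
def uncurryApp (aa : C → ℕ) : ATerm C → ATerm C → ATerm C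
  | .app (some (c, i)) us, w =>
    if i < aa c then .app (some (c, i + 1)) (appendArg us w) else appT (.app (some (c, i)) us) w
  | x, w => appT x w

/-- The `U`-normal form `t↓_U`. -/
def uncurryNF (aa : C → ℕ) : ATerm C → ATerm C
  | .var x => .var x
  | .app none ts =>
    uncurryApp aa (uncurryNF aa (ts ⟨0, by simp [uar]⟩)) (uncurryNF aa (ts ⟨1, by simp [uar]⟩))
  | .app (some p) ts => .app (some p) fun i => uncurryNF aa (ts i)

@[simp] theorem uncurryNF_appT (a b : ATerm C) :
    uncurryNF aa (appT a b) = uncurryApp aa (uncurryNF aa a) (uncurryNF aa b) := rfl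

@[simp] theorem uncurryNF_sym (p : C × ℕ) (ts : Fin (uar (some p)) → ATerm C) :
    uncurryNF aa (.app (some p) ts) = .app (some p) fun i => uncurryNF aa (ts i) := rfl

theorem uncurryApp_absorb {c : C} {i : ℕ} (h : i < aa c) (us : Fin (uar (some (c, i))) → ATerm C)
    (w : ATerm C) :
    uncurryApp aa (.app (some (c, i)) us) w = .app (some (c, i + 1)) (appendArg us w) := by
  simp [uncurryApp, h]

/-- `x ∘ w` is a `U`-redex exactly when `Absorbing aa x`. -/
def Absorbing (aa : C → ℕ) (x : ATerm C) : Prop :=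
  ∃ c i, i < aa c ∧ x.root = some (some (c, i))

theorem uncurryApp_of_not_absorbing {x : ATerm C} (hx : ¬ Absorbing aa x) (w : ATerm C) :
    uncurryApp aa x w = appT x w := by
  match x with
  | .var _ | .app none _ => rfl
  | .app (some (c, i)) us =>
    have hi : ¬ i < aa c := fun hi => hx ⟨c, i, hi, rfl⟩
    simp [uncurryApp, hi]

theorem uncurryApp_subst {x : ATerm C} (hx : ∀ y, x ≠ .var y) (w : ATerm C)
    (σ : ℕ → ATerm C) :
    uncurryApp aa (x.subst σ) (w.subst σ) = (uncurryApp aa x w).subst σ := by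
  match x with
  | .var y => exact absurd rfl (hx y)
  | .app none _ =>
    show appT _ _ = Term.subst σ (appT _ _)
    rw [appT_subst]
    rfl
  | .app (some (c, i)) us =>
    by_cases hi : i < aa c
    · simp only [Term.subst, uncurryApp, hi, if_true]
      congr 1
      funext j
      unfold appendArg
      split_ifs <;> rfl
    · simp [Term.subst, uncurryApp, hi]

theorem uncurryApp_ne_var (x w : ATerm C) (y : ℕ) : uncurryApp aa x w ≠ .var y := by
  unfold uncurryApp
  split
  · split <;> simp [appT]
  · simp [appT]

theorem uncurryNF_ne_var {t : ATerm C} (ht : ∀ y, t ≠ .var y) (y : ℕ) :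
    uncurryNF aa t ≠ .var y := by
  induction t using ATerm.induction with
  | var x => exact absurd rfl (ht x)
  | app a b _ _ => exact uncurryApp_ne_var _ _ y
  | sym p ts _ => simp

theorem rew_uncurryApp {c : C} {i : ℕ} (h : i < aa c) (us : Fin (uar (some (c, i))) → ATerm C)
    (w : ATerm C) :
    Rew (USys aa) (appT (.app (some (c, i)) us) w) (.app (some (c, i + 1)) (appendArg us w)) := by
  let σ : ℕ → ATerm C := fun n => if hn : n < i then us ⟨n, hn⟩ else w
  have hl : (appT (fiT c i) (.var i)).subst σ = appT (.app (some (c, i)) us) w := by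
    rw [appT_subst, fiT_subst]
    congr 2
    · funext j
      exact dif_pos j.2
    · exact dif_neg (lt_irrefl i)
  have hr : (fiT c (i + 1)).subst σ = .app (some (c, i + 1)) (appendArg us w) := rfl
  rw [← hl, ← hr]
  exact .rule _ _ σ (mem_USys.2 ⟨c, i, h, rfl, rfl⟩)

theorem rstar_uncurryApp (x w : ATerm C) : RStar (USys aa) (appT x w) (uncurryApp aa x w) := by
  match x with
  | .var _ | .app none _ => exact .refl
  | .app (some (c, i)) us =>
    by_cases hi : i < aa c
    · rw [uncurryApp_absorb hi]
      exact .single (rew_uncurryApp hi us w)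
    · simp only [uncurryApp, hi, if_false]
      exact .refl

theorem rstar_uncurryNF (t : ATerm C) : RStar (USys aa) t (uncurryNF aa t) := by
  induction t using ATerm.induction with
  | var x => exact .refl
  | app a b iha ihb => exact (RStar.appT iha ihb).trans (rstar_uncurryApp _ _)
  | sym p ts ih => exact RStar.app ih

end Uncurrying

section UncurryingProperties

variable {C : Type} {aa : C → ℕ}

theorem uncurryNF_eq_of_rew {s t : ATerm C} (h : Rew (USys aa) s t) :
    uncurryNF aa s = uncurryNF aa t := by
  refine h.induction_on_appT (fun l r σ hm => ?_) (fun a a' b _ ih => ?_)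
    (fun a b b' _ ih => ?_) (fun p ts i u _ ih => ?_)
  · obtain ⟨c, i, hi, rfl, rfl⟩ := mem_USys.1 hm
    rw [appT_subst, uncurryNF_appT, fiT_subst, fiT_subst, uncurryNF_sym, uncurryNF_sym,
      uncurryApp_absorb hi]
    congr 1
    funext j
    simp only [appendArg]
    split_ifs with hj
    · rfl
    · rw [show (j : ℕ) = i by have := j.2; simp [uar] at this; omega]
      rfl
  · rw [uncurryNF_appT, uncurryNF_appT, ih]
  · rw [uncurryNF_appT, uncurryNF_appT, ih]
  · rw [uncurryNF_sym, uncurryNF_sym]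
    congr 1
    funext j
    rcases eq_or_ne j i with rfl | hj <;> simp [*]

theorem uncurryNF_eq_of_rstar {s t : ATerm C} (h : RStar (USys aa) s t) :
    uncurryNF aa s = uncurryNF aa t := by
  induction h with
  | refl => rfl
  | tail _ hstep ih => exact ih.trans (uncurryNF_eq_of_rew hstep)

theorem rstar_uncurryNF_of_rstar {s t : ATerm C} (h : RStar (USys aa) s t) :
    RStar (USys aa) t (uncurryNF aa s) :=
  uncurryNF_eq_of_rstar h ▸ rstar_uncurryNF t

theorem size_le_of_rstar_USys {s t : ATerm C} (h : RStar (USys aa) s t) : t.size ≤ s.size := by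
  induction h with
  | refl => exact le_rfl
  | tail _ hstep ih => exact (size_lt_of_rew_USys hstep).le.trans ih

theorem nf_uncurryNF (t : ATerm C) : NF (USys aa) (uncurryNF aa t) := by
  intro u h
  -- `u` would have the normal form `uncurryNF aa t` but be strictly smaller than it
  have hidem : uncurryNF aa (uncurryNF aa t) = uncurryNF aa t :=
    (uncurryNF_eq_of_rstar (rstar_uncurryNF t)).symm
  have hlt := size_lt_of_rew_USys h
  have hle := size_le_of_rstar_USys (rstar_uncurryNF (aa := aa) u)
  rw [← uncurryNF_eq_of_rew h, hidem] at hle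
  omega

theorem normTo_uncurryNF (t : ATerm C) : NormTo (USys aa) t (uncurryNF aa t) :=
  ⟨rstar_uncurryNF t, nf_uncurryNF t⟩

theorem uncurryNF_subst {t : ATerm C} (ht : HeadVarFree t) (σ : ℕ → ATerm C) :
    uncurryNF aa (t.subst σ) = (uncurryNF aa t).subst fun x => uncurryNF aa (σ x) := by
  induction t using ATerm.induction with
  | var x => rfl
  | app a b iha ihb =>
    obtain ⟨hnv, ha, hb⟩ := headVarFree_appT.1 ht
    rw [appT_subst, uncurryNF_appT, uncurryNF_appT, iha ha, ihb hb,
      uncurryApp_subst (uncurryNF_ne_var hnv)]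
  | sym p ts ih =>
    change Term.app (some p) _ = Term.app (some p) _
    congr 1
    funext i
    exact ih i (ht.arg i)

end UncurryingProperties

section Heads

variable {C : Type} {aa : C → ℕ}

theorem headCount_appT (a b : ATerm C) :
    headCount (appT a b) = (headCount a).map fun p => (p.1, p.2 + 1) := rfl

theorem exists_headCount {l : ATerm C} (ha : ApplicativeT l) (hh : HeadVarFree l)
    (hl : ∀ y, l ≠ .var y) : ∃ c n, headCount l = some (c, n) := by
  induction l using ATerm.induction with
  | var x => exact absurd rfl (hl x)
  | app a b iha _ =>
    obtain ⟨hnv, hha, -⟩ := headVarFree_appT.1 hh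
    obtain ⟨c, n, hc⟩ := iha (applicativeT_appT.1 ha).1 hha hnv
    exact ⟨c, n + 1, by rw [headCount_appT, hc]; rfl⟩
  | sym p ts _ =>
    obtain ⟨c, i⟩ := p
    obtain rfl := ha.arity_eq_zero
    exact ⟨c, 0, rfl⟩

theorem root_uncurryApp_of_root_sym {x : ATerm C} {c : C} {m : ℕ}
    (hx : x.root = some (some (c, m))) (w : ATerm C) :
    (uncurryApp aa x w).root = some (if m < aa c then some (c, m + 1) else none) := by
  match x, hx with
  | .app (some (c, m)) us, rfl =>
    by_cases hm : m < aa c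
    · simp [uncurryApp, hm, Term.root]
    · simp [uncurryApp, hm]

theorem root_uncurryApp_of_root_appT {x : ATerm C} (hx : x.root = some none) (w : ATerm C) :
    (uncurryApp aa x w).root = some none := by
  match x, hx with
  | .app none _, rfl => rfl

theorem root_uncurryNF_of_headCount {l : ATerm C} (ha : ApplicativeT l) {c : C} {n : ℕ}
    (h : headCount l = some (c, n)) :
    (uncurryNF aa l).root = some (if n ≤ aa c then some (c, n) else none) := by
  induction l using ATerm.induction generalizing n with
  | var x => cases h
  | app a b iha _ =>
    rw [headCount_appT, Option.map_eq_some_iff] at h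
    obtain ⟨⟨c', m⟩, hm, he⟩ := h
    obtain ⟨rfl, rfl⟩ := Prod.mk.inj he
    have ih := iha (applicativeT_appT.1 ha).1 hm
    rw [uncurryNF_appT]
    split_ifs at ih with hle
    · rw [root_uncurryApp_of_root_sym ih]
      rfl
    · rw [root_uncurryApp_of_root_appT ih, if_neg (by omega)]
  | sym p ts _ =>
    obtain ⟨c', i⟩ := p
    obtain rfl := ha.arity_eq_zero
    cases h
    simp [Term.root]

theorem not_absorbing_uncurryNF_subst {l : ATerm C} (ha : ApplicativeT l) {c : C} {n : ℕ}
    (h : headCount l = some (c, n)) (hn : ¬ n < aa c) (σ : ℕ → ATerm C) :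
    ¬ Absorbing aa ((uncurryNF aa l).subst σ) := by
  rintro ⟨c', i, hi, hroot⟩
  rw [Term.root_subst (root_uncurryNF_of_headCount ha h)] at hroot
  split_ifs at hroot
  · obtain ⟨rfl, rfl⟩ := Prod.mk.inj (Option.some.inj (Option.some.inj hroot))
    exact hn hi
  · cases hroot

end Heads

section Eta

variable {C : Type} {aa : C → ℕ} {R : Set (ATerm C × ATerm C)}

theorem Eta.rew {p : ATerm C × ATerm C} (h : Eta aa R p) : Rew R p.1 p.2 := by
  induction h with
  | base p hp => exact .of_mem hp
  | eta l r c n x _ _ _ _ _ ih => exact ih.appT_left _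

theorem Eta.applicativeT (hR : IsATRS R) {p : ATerm C × ATerm C} (h : Eta aa R p) :
    ApplicativeT p.1 ∧ ApplicativeT p.2 := by
  induction h with
  | base p hp => exact ⟨(hR p hp).2.2.1, (hR p hp).2.2.2⟩
  | eta l r c n x _ _ _ _ _ ih =>
    exact ⟨applicativeT_appT.2 ⟨ih.1, applicativeT_var x⟩,
      applicativeT_appT.2 ⟨ih.2, applicativeT_var x⟩⟩

theorem Eta.headVarFree (hR : IsATRS R) (hl : LHVF R) {p : ATerm C × ATerm C}
    (h : Eta aa R p) : HeadVarFree p.1 ∧ ∀ y, p.1 ≠ .var y := by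
  induction h with
  | base p hp => exact ⟨hl p hp, (hR p hp).1⟩
  | eta l r c n x _ _ _ _ _ ih =>
    exact ⟨headVarFree_appT.2 ⟨ih.2, ih.1, headVarFree_var x⟩, fun y => by simp [appT]⟩

theorem mem_UD_uncurryNF {l r : ATerm C} (h : Eta aa R (l, r)) :
    (uncurryNF aa l, uncurryNF aa r) ∈ UD aa R :=
  .inl ⟨l, r, h, normTo_uncurryNF l, normTo_uncurryNF r⟩

end Eta

section Simulation

variable {C : Type} {aa : C → ℕ} {S : Set (ATerm C × ATerm C)}

def appList (a : ATerm C) (ws : List (ATerm C)) : ATerm C := ws.foldl appT a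

@[simp] theorem appList_nil (a : ATerm C) : appList a [] = a := rfl

@[simp] theorem appList_cons (a w : ATerm C) (ws : List (ATerm C)) :
    appList a (w :: ws) = appList (appT a w) ws := rfl

theorem Rew.appList {a b : ATerm C} (h : Rew S a b) (ws : List (ATerm C)) :
    Rew S (appList a ws) (appList b ws) := by
  induction ws generalizing a b with
  | nil => exact h
  | cons w ws ih => exact ih (h.appT_left w)

theorem rstar_appList_uncurryNF {a a' : ATerm C} (h : RStar (USys aa) a a')
    (ws : List (ATerm C)) :
    RStar (USys aa) (appList a ws) (appList a' (ws.map (uncurryNF aa))) := by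
  induction ws generalizing a a' with
  | nil => exact h
  | cons w ws ih => exact ih (h.appT (rstar_uncurryNF w))

theorem uncurryNF_appList (a : ATerm C) (ws : List (ATerm C)) :
    uncurryNF aa (appList a ws)
      = (ws.map (uncurryNF aa)).foldl (uncurryApp aa) (uncurryNF aa a) := by
  induction ws generalizing a with
  | nil => rfl
  | cons w ws ih => rw [appList_cons, ih, List.map_cons, List.foldl_cons, uncurryNF_appT]

theorem not_absorbing_appT (a b : ATerm C) : ¬ Absorbing aa (appT a b) := by
  simp [Absorbing]

theorem foldl_uncurryApp_of_not_absorbing {x : ATerm C} (hx : ¬ Absorbing aa x)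
    (ws : List (ATerm C)) : ws.foldl (uncurryApp aa) x = appList x ws := by
  induction ws generalizing x with
  | nil => rfl
  | cons w ws ih =>
    rw [List.foldl_cons, uncurryApp_of_not_absorbing hx, ih (not_absorbing_appT _ _)]
    rfl

/-- Unlike `TransGen (Rew S)`, this relation is preserved by `uncurryApp aa · w`. -/
def ArgStep (S : Set (ATerm C × ATerm C)) (x y : ATerm C) : Prop :=
  ∃ f vs i b, x = .app f vs ∧ y = .app f (update vs i b) ∧ TransGen (Rew S) (vs i) b

theorem ArgStep.transGen {x y : ATerm C} (h : ArgStep S x y) : TransGen (Rew S) x y := by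
  obtain ⟨f, vs, i, b, rfl, rfl, hb⟩ := h
  exact transGen_rew_app_update hb

theorem argStep_appT_left {x y : ATerm C} (h : TransGen (Rew S) x y) (w : ATerm C) :
    ArgStep S (appT x w) (appT y w) :=
  ⟨none, _, ⟨0, by simp [uar]⟩, y, rfl, (app_none_update_zero x w y).symm, h⟩

theorem argStep_appT_right (x : ATerm C) {w w' : ATerm C} (h : TransGen (Rew S) w w') :
    ArgStep S (appT x w) (appT x w') :=
  ⟨none, _, ⟨1, by simp [uar]⟩, w', rfl, (app_none_update_one x w w').symm, h⟩

section appendArg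

variable {c : C} {j : ℕ}

theorem appendArg_castSucc (vs : Fin (uar (some (c, j))) → ATerm C) (w : ATerm C)
    (i : Fin (uar (some (c, j)))) : appendArg vs w ⟨i.1, Nat.lt_succ_of_lt i.2⟩ = vs i :=
  dif_pos i.2

theorem appendArg_last (vs : Fin (uar (some (c, j))) → ATerm C) (w : ATerm C) :
    appendArg vs w ⟨j, Nat.lt_succ_self j⟩ = w :=
  dif_neg (lt_irrefl j)

theorem appendArg_update (vs : Fin (uar (some (c, j))) → ATerm C) (i : Fin (uar (some (c, j))))
    (b w : ATerm C) :
    appendArg (update vs i b) w = update (appendArg vs w) ⟨i.1, Nat.lt_succ_of_lt i.2⟩ b := by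
  funext k
  by_cases hk : k.1 = i.1
  · have hk' : k = ⟨i.1, Nat.lt_succ_of_lt i.2⟩ := Fin.ext hk
    subst hk'
    rw [update_self, appendArg_castSucc, update_self]
  · rw [update_of_ne (fun h => hk (congrArg Fin.val h))]
    unfold appendArg
    split_ifs with hkj
    · exact update_of_ne (fun h => hk (congrArg Fin.val h)) _ _
    · rfl

theorem appendArg_update_last (vs : Fin (uar (some (c, j))) → ATerm C) (w w' : ATerm C) :
    appendArg vs w' = update (appendArg vs w) ⟨j, Nat.lt_succ_self j⟩ w' := by
  funext k
  by_cases hk : k.1 = j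
  · have hk' : k = ⟨j, Nat.lt_succ_self j⟩ := Fin.ext hk
    subst hk'
    rw [update_self, appendArg_last]
  · rw [update_of_ne (fun h => hk (congrArg Fin.val h))]
    have hk2 : k.1 < j + 1 := k.2
    unfold appendArg
    split_ifs
    · rfl
    · omega

end appendArg

theorem ArgStep.uncurryApp_left {x y : ATerm C} (h : ArgStep S x y) (w : ATerm C) :
    ArgStep S (uncurryApp aa x w) (uncurryApp aa y w) := by
  obtain ⟨f, vs, i, b, rfl, rfl, hb⟩ := h
  match f with
  | none => exact argStep_appT_left (transGen_rew_app_update hb) w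
  | some (c, j) =>
    by_cases hj : j < aa c
    · rw [uncurryApp_absorb hj, uncurryApp_absorb hj, appendArg_update]
      exact ⟨_, _, _, b, rfl, rfl, by rwa [appendArg_castSucc]⟩
    · simp only [uncurryApp, hj, if_false]
      exact argStep_appT_left (transGen_rew_app_update hb) w

theorem argStep_uncurryApp_right (x : ATerm C) {w w' : ATerm C} (h : TransGen (Rew S) w w') :
    ArgStep S (uncurryApp aa x w) (uncurryApp aa x w') := by
  match x with
  | .var _ | .app none _ => exact argStep_appT_right _ h
  | .app (some (c, j)) us =>
    by_cases hj : j < aa c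
    · rw [uncurryApp_absorb hj, uncurryApp_absorb hj, appendArg_update_last us w w']
      exact ⟨_, _, _, w', rfl, rfl, by rwa [appendArg_last]⟩
    · simp only [uncurryApp, hj, if_false]
      exact argStep_appT_right _ h

theorem ArgStep.foldl_uncurryApp {x y : ATerm C} (h : ArgStep S x y) (ws : List (ATerm C)) :
    TransGen (Rew S) (ws.foldl (uncurryApp aa) x) (ws.foldl (uncurryApp aa) y) := by
  induction ws generalizing x y with
  | nil => exact h.transGen
  | cons w ws ih => exact ih (h.uncurryApp_left w)

end Simulation

section TerminationFromUncurried

variable {C : Type} {aa : C → ℕ} {R : Set (ATerm C × ATerm C)}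

theorem transGen_of_eta_of_not_absorbing (hR : IsATRS R) (hl : LHVF R) {l r : ATerm C}
    (h : Eta aa R (l, r)) (σ : ℕ → ATerm C) (ws : List (ATerm C))
    (hws : ws = [] ∨ ¬ Absorbing aa (uncurryNF aa (l.subst σ))) :
    TransGen (Rew (UD aa R))
      (uncurryNF aa (appList (l.subst σ) ws)) (uncurryNF aa (appList (r.subst σ) ws)) := by
  obtain ⟨hhv, -⟩ := h.headVarFree hR hl
  set ν := fun x => uncurryNF aa (σ x)
  have hlhs : uncurryNF aa (appList (l.subst σ) ws)
      = appList ((uncurryNF aa l).subst ν) (ws.map (uncurryNF aa)) := by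
    rw [uncurryNF_appList, ← uncurryNF_subst hhv]
    rcases hws with rfl | hna
    · rfl
    · exact foldl_uncurryApp_of_not_absorbing hna _
  have hrhs : RStar (USys aa) (appList (r.subst σ) ws)
      (appList ((uncurryNF aa r).subst ν) (ws.map (uncurryNF aa))) :=
    rstar_appList_uncurryNF (((rstar_uncurryNF r).subst σ).trans
      (RStar.subst_of_forall (uncurryNF aa r) fun x => rstar_uncurryNF (σ x))) ws
  rw [hlhs]
  exact .head' ((Rew.rule _ _ ν (mem_UD_uncurryNF h)).appList _)
    ((rstar_uncurryNF_of_rstar hrhs).mono Set.subset_union_right)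

/-- `ws` holds the arguments that η-expansions of the rule may absorb. -/
theorem transGen_of_eta (hR : IsATRS R) (hl : LHVF R) :
    ∀ (ws : List (ATerm C)) (l r : ATerm C) (σ : ℕ → ATerm C), Eta aa R (l, r) →
      TransGen (Rew (UD aa R))
        (uncurryNF aa (appList (l.subst σ) ws)) (uncurryNF aa (appList (r.subst σ) ws))
  | [], l, r, σ, h => transGen_of_eta_of_not_absorbing hR hl h σ [] (.inl rfl)
  | w :: ws, l, r, σ, h => by
    obtain ⟨hhv, hnv⟩ := h.headVarFree hR hl
    have hal := (h.applicativeT hR).1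
    obtain ⟨c, n, hc⟩ := exists_headCount hal hhv hnv
    by_cases hn : n < aa c
    · obtain ⟨x, hx⟩ := ((Term.finite_vars l).union (Term.finite_vars r)).exists_notMem
      simp only [Set.mem_union, not_or] at hx
      have hfresh : ∀ t : ATerm C, ¬ Subterm (.var x) t → t.subst (update σ x w) = t.subst σ :=
        fun t ht => Term.subst_congr fun y hy => update_of_ne (by rintro rfl; exact ht hy) _ _
      have := transGen_of_eta hR hl ws (appT l (.var x)) (appT r (.var x)) (update σ x w)
        (.eta l r c n x h hc hn hx.1 hx.2)
      rwa [appT_subst, appT_subst, hfresh l hx.1, hfresh r hx.2, Term.subst, update_self] at this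
    · refine transGen_of_eta_of_not_absorbing hR hl h σ _ (.inr ?_)
      rw [uncurryNF_subst hhv]
      exact not_absorbing_uncurryNF_subst hal hc hn _

theorem transGen_uncurryNF_appList_of_rew (hR : IsATRS R) (hl : LHVF R) {s t : ATerm C}
    (h : Rew R s t) (ws : List (ATerm C)) :
    TransGen (Rew (UD aa R)) (uncurryNF aa (appList s ws)) (uncurryNF aa (appList t ws)) := by
  revert ws
  refine h.induction_on_appT (fun l r σ hm ws => ?_) (fun a a' b _ ih ws => ?_)
    (fun a b b' _ ih ws => ?_) (fun p ts i u _ ih ws => ?_)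
  · exact transGen_of_eta hR hl ws l r σ (.base _ hm)
  · exact ih (b :: ws)
  · simp only [uncurryNF_appList, uncurryNF_appT]
    simpa using (argStep_uncurryApp_right _ (ih [])).foldl_uncurryApp _
  · simp only [uncurryNF_appList, uncurryNF_sym]
    refine ArgStep.foldl_uncurryApp ⟨_, _, i, uncurryNF aa u, rfl, ?_, by simpa using ih []⟩ _
    congr 1
    funext j
    rcases eq_or_ne j i with rfl | hj <;> simp [*]

theorem terminating_of_terminating_UD (hR : IsATRS R) (hl : LHVF R)
    (h : Terminating (UD aa R)) : Terminating R :=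
  Subrelation.wf (fun hst => transGen_uncurryNF_appList_of_rew hR hl hst [])
    (InvImage.wf (uncurryNF aa) (h.transGen.mono fun _ _ => transGen_swap.2))

end TerminationFromUncurried

section TerminationOfUncurried

variable {C : Type} {aa : C → ℕ} {R S : Set (ATerm C × ATerm C)}

theorem appList_append (a : ATerm C) (ws ws' : List (ATerm C)) :
    appList a (ws ++ ws') = appList (appList a ws) ws' :=
  List.foldl_append

theorem appList_subst (a : ATerm C) (ws : List (ATerm C)) (σ : ℕ → ATerm C) :
    (appList a ws).subst σ = appList (a.subst σ) (ws.map (·.subst σ)) := by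
  induction ws generalizing a with
  | nil => rfl
  | cons w ws ih => rw [appList_cons, ih, appT_subst]; rfl

theorem rew_appList_set {b : ATerm C} :
    ∀ {ws : List (ATerm C)} {i : ℕ} (hi : i < ws.length), Rew S ws[i] b → (a : ATerm C) →
      Rew S (appList a ws) (appList a (ws.set i b))
  | w :: ws, 0, _, h, a => by simpa using (h.appT_right a).appList ws
  | w :: ws, i + 1, hi, h, a => by
    simpa using rew_appList_set (Nat.lt_of_succ_lt_succ hi) h (appT a w)

theorem constT_subst (c : C) (σ : ℕ → ATerm C) : (constT c).subst σ = constT c := by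
  change Term.app _ _ = Term.app _ _
  congr 1
  funext i
  exact i.elim0

theorem curryId_appT (a b : ATerm C) : curryId (appT a b) = appT (curryId a) (curryId b) := rfl

theorem curryId_sym (c : C) (i : ℕ) (ts : Fin (uar (some (c, i))) → ATerm C) :
    curryId (.app (some (c, i)) ts) = appList (constT c) (List.ofFn fun j => curryId (ts j)) := by
  rw [curryId]
  rfl

theorem curryId_subst (t : ATerm C) (σ : ℕ → ATerm C) :
    curryId (t.subst σ) = (curryId t).subst fun x => curryId (σ x) := by
  induction t using ATerm.induction with
  | var x => rfl
  | app a b iha ihb => rw [appT_subst, curryId_appT, curryId_appT, iha, ihb, appT_subst]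
  | sym p ts ih =>
    obtain ⟨c, i⟩ := p
    change curryId (.app (some (c, i)) fun j => (ts j).subst σ) = _
    rw [curryId_sym, curryId_sym, appList_subst, constT_subst, List.map_ofFn]
    exact congrArg _ (congrArg List.ofFn (funext ih))

theorem curryId_of_applicativeT {t : ATerm C} (h : ApplicativeT t) : curryId t = t := by
  induction t using ATerm.induction with
  | var x => rfl
  | app a b iha ihb =>
    obtain ⟨ha, hb⟩ := applicativeT_appT.1 h
    rw [curryId_appT, iha ha, ihb hb]
  | sym p ts _ =>
    obtain ⟨c, i⟩ := p
    obtain rfl := h.arity_eq_zero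
    rw [curryId_sym,
      List.eq_nil_of_length_eq_zero (List.length_ofFn (f := fun j => curryId (ts j))), appList_nil]
    change Term.app _ _ = Term.app _ _
    congr 1
    funext j
    exact j.elim0

theorem curryId_fiT (c : C) (i : ℕ) :
    curryId (fiT c i) = appList (constT c) (List.ofFn fun j : Fin i => .var j) :=
  curryId_sym c i _

theorem curryId_eq_of_rew_USys {s t : ATerm C} (h : Rew (USys aa) s t) :
    curryId s = curryId t := by
  refine h.induction_on_appT (fun l r σ hm => ?_) (fun a a' b _ ih => ?_)
    (fun a b b' _ ih => ?_) (fun p ts i u _ ih => ?_)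
  · obtain ⟨c, i, -, rfl, rfl⟩ := mem_USys.1 hm
    rw [curryId_subst, curryId_subst, curryId_appT, curryId_fiT, curryId_fiT, List.ofFn_succ',
      List.concat_eq_append, appList_append]
    rfl
  · rw [curryId_appT, curryId_appT, ih]
  · rw [curryId_appT, curryId_appT, ih]
  · obtain ⟨c, k⟩ := p
    rw [curryId_sym, curryId_sym]
    congr 2
    funext j
    rcases eq_or_ne j i with rfl | hj <;> simp [*]

theorem curryId_eq_of_rstar_USys {s t : ATerm C} (h : RStar (USys aa) s t) :
    curryId s = curryId t := by
  induction h with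
  | refl => rfl
  | tail _ hstep ih => exact ih.trans (curryId_eq_of_rew_USys hstep)

theorem rew_curryId_or_rew_USys (hR : IsATRS R) {s t : ATerm C} (h : Rew (UD aa R) s t) :
    Rew R (curryId s) (curryId t) ∨ Rew (USys aa) s t := by
  refine h.induction_on_appT (fun l r σ hm => ?_) (fun a a' b _ ih => ?_)
    (fun a b b' _ ih => ?_) (fun p ts i u _ ih => ?_)
  · rcases hm with ⟨l₀, r₀, heta, ⟨hl, -⟩, ⟨hr, -⟩⟩ | hU
    · obtain ⟨hal, har⟩ := heta.applicativeT hR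
      have el : curryId l = l₀ :=
        (curryId_eq_of_rstar_USys hl).symm.trans (curryId_of_applicativeT hal)
      have er : curryId r = r₀ :=
        (curryId_eq_of_rstar_USys hr).symm.trans (curryId_of_applicativeT har)
      left
      rw [curryId_subst, curryId_subst, el, er]
      exact heta.rew.subst _
    · exact .inr (.rule l r σ hU)
  · rw [curryId_appT, curryId_appT]
    exact ih.imp (·.appT_left _) (·.appT_left _)
  · rw [curryId_appT, curryId_appT]
    exact ih.imp (·.appT_right _) (·.appT_right _)
  · refine ih.imp (fun hR' => ?_) (.congr _ ts i u)
    obtain ⟨c, k⟩ := p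
    rw [curryId_sym, curryId_sym]
    have hupd : (fun j => curryId (update ts i u j))
        = update (fun j => curryId (ts j)) i (curryId u) := by
      funext j
      rcases eq_or_ne j i with rfl | hj <;> simp [*]
    rw [hupd, List.ofFn_update]
    exact rew_appList_set (by simp) (by simpa using hR') _

theorem terminating_UD_of_terminating (hR : IsATRS R) (h : Terminating R) :
    Terminating (UD aa R) :=
  wellFounded_of_lex_map curryId h (terminating_USys aa) fun _ _ hst =>
    (rew_curryId_or_rew_USys hR hst).imp_right
      fun hU => ⟨(curryId_eq_of_rew_USys hU).symm, hU⟩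

end TerminationOfUncurried

theorem uncurry_termination_iff_general {C : Type} (R : Set (ATerm C × ATerm C)) (aa : C → ℕ)
    (hR : IsATRS R) (hl : LHVF R) :
    Terminating R ↔ Terminating (UD aa R) :=
  ⟨terminating_UD_of_terminating hR, terminating_of_terminating_UD hR hl⟩

/-- a left head variable free ATRS `R` is terminating iff
`U↓(R) = R_η↓ ∪ U(R)` is terminating. -/
theorem uncurry_termination_iff {C : Type} (R : Set (ATerm C × ATerm C)) (aa : C → ℕ)
    (hR : IsATRS R) (hl : LHVF R) (haa : AASpec R aa) :
    Terminating R ↔ Terminating (UD aa R) :=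
  uncurry_termination_iff_general R aa hR hl
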